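/- arXiv:1904.13040 — 2 statements merged into one kernel-verified Lean document; each statement's English description precedes it below -/
import Mathlib

section
/- Let p be a prime, and let a+1 = ∑ α_i p^i and b = ∑ β_i p^i be p-adic expansions. If I = { i ≥ 0 : ∑_{j=0}^{i} (α_j + β_j) p^j ≥ p^{i+1} } is nonempty with minimum i₀ and maximum i₁, then there exists c in the interval [a+1, a+b+1] with v_p(c) ≥ i₁ + 1; consequently v_p((a+b+1)!/(a!·b!)) ≤ v_p(lcm(a+1, ..., a+b+1)). -/
/-!
Let `v = v_p(a+1)` and let `k` be the top carry position. A carry at position `j` forces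
`(a+1) mod p^(j+1) ≠ 0`, so every carry position `j` satisfies `v ≤ j ≤ k`. By Kummer's theorem
`v_p(C(a+b+1, a+1))` counts these carries, hence `v_p((a+1) · C(a+b+1, a+1)) ≤ k + 1`, and this
product is `(a+b+1)!/(a!·b!)`. On the other hand the carry at `k` says that
`(a+1) mod p^(k+1) + b mod p^(k+1) ≥ p^(k+1)`, so the next multiple of `p^(k+1)` above `a` is at
most `a+b+1`; it divides the lcm, whose valuation is therefore at least `k + 1`.
-/

/-- The carry condition at position `i` when adding `a+1` and `b` in base `p`:
`∑_{j=0}^{i} (α_j + β_j) p^j ≥ p^{i+1}`, where `α_j, β_j` are the base-`p` digits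
of `a+1` and `b` respectively. -/
def CarryAt (p a b i : ℕ) : Prop :=
  p ^ (i + 1) ≤
    ∑ j ∈ Finset.range (i + 1), ((a + 1) / p ^ j % p + b / p ^ j % p) * p ^ j

open Finset Nat

lemma sum_digit_mul_pow_eq_mod (p x n : ℕ) :
    ∑ j ∈ range n, (x / p ^ j % p) * p ^ j = x % p ^ n := by
  induction n with
  | zero => exact (Nat.mod_one x).symm
  | succ n ih => rw [sum_range_succ, ih, pow_succ, Nat.mod_mul, mul_comm]

lemma carryAt_iff {p a b i : ℕ} :
    CarryAt p a b i ↔ p ^ (i + 1) ≤ (a + 1) % p ^ (i + 1) + b % p ^ (i + 1) := by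
  simp only [CarryAt, add_mul, sum_add_distrib, sum_digit_mul_pow_eq_mod]

section ModCarry

variable {m n b : ℕ}

lemma not_dvd_of_le_mod_add_mod (hm : 0 < m) (h : m ≤ n % m + b % m) : ¬ m ∣ n := by
  intro hdvd
  have := Nat.mod_lt b hm
  rw [Nat.mod_eq_zero_of_dvd hdvd] at h
  omega

lemma exists_dvd_mem_Icc_of_le_mod_add_mod (hm : 0 < m) (h : m ≤ n % m + b % m) :
    ∃ c ∈ Icc n (n + b), m ∣ c := by
  refine ⟨m * (n / m + 1), ?_, dvd_mul_right _ _⟩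
  have := Nat.div_add_mod n m
  have := Nat.mod_lt n hm
  have := Nat.mod_le b m
  rw [mem_Icc]
  constructor <;> nlinarith

end ModCarry

section Valuation

variable {p : ℕ} [Fact p.Prime] {a b : ℕ}

lemma padicValNat_le_of_carryAt {j : ℕ} (h : CarryAt p a b j) : padicValNat p (a + 1) ≤ j := by
  have hpow : ¬ p ^ (j + 1) ∣ a + 1 :=
    not_dvd_of_le_mod_add_mod (pow_pos (Fact.out : p.Prime).pos _) (carryAt_iff.mp h)
  rw [padicValNat_dvd_iff_le a.add_one_ne_zero] at hpow
  omega

lemma exists_mem_Icc_le_padicValNat_of_carryAt {k : ℕ} (h : CarryAt p a b k) :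
    ∃ c ∈ Icc (a + 1) (a + b + 1), k + 1 ≤ padicValNat p c := by
  obtain ⟨c, hc, hdvd⟩ :=
    exists_dvd_mem_Icc_of_le_mod_add_mod (pow_pos (Fact.out : p.Prime).pos _) (carryAt_iff.mp h)
  have hc0 : c ≠ 0 := by rw [mem_Icc] at hc; omega
  exact ⟨c, by rwa [add_right_comm] at hc, (padicValNat_dvd_iff_le hc0).mp hdvd⟩

lemma padicValNat_le_padicValNat_lcm {s : Finset ℕ} (hs : 0 ∉ s) {c : ℕ} (hc : c ∈ s) :
    padicValNat p c ≤ padicValNat p (s.lcm id) := by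
  have hlcm : s.lcm id ≠ 0 := by
    rw [Ne, Finset.lcm_eq_zero_iff]
    simpa using hs
  exact (padicValNat_dvd_iff_le hlcm).mp (pow_padicValNat_dvd.trans (dvd_lcm hc))

lemma padicValNat_add_padicValNat_choose_le {k : ℕ} (hk : CarryAt p a b k)
    (hmax : ∀ i, CarryAt p a b i → i ≤ k) :
    padicValNat p (a + 1) + padicValNat p ((a + b + 1).choose (a + 1)) ≤ k + 1 := by
  set v := padicValNat p (a + 1)
  have hcarries : {i ∈ Ico 1 (log p (a + b + 1) + 1) | p ^ i ≤ (a + 1) % p ^ i + b % p ^ i}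
      ⊆ Icc (v + 1) (k + 1) := by
    intro i hi
    simp only [mem_filter, mem_Ico] at hi
    obtain ⟨⟨hi1, -⟩, hcarry⟩ := hi
    obtain ⟨j, rfl⟩ : ∃ j, i = j + 1 := ⟨i - 1, by omega⟩
    have hj : CarryAt p a b j := carryAt_iff.mpr hcarry
    have := padicValNat_le_of_carryAt hj
    have := hmax j hj
    rw [mem_Icc]
    omega
  have hkummer : padicValNat p ((a + b + 1).choose (a + 1)) =
      #{i ∈ Ico 1 (log p (a + b + 1) + 1) | p ^ i ≤ (a + 1) % p ^ i + b % p ^ i} := by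
    rw [show a + b + 1 = b + (a + 1) by ring]
    exact padicValNat_choose' (lt_succ_self _)
  have hcard := card_le_card hcarries
  have := padicValNat_le_of_carryAt hk
  rw [card_Icc] at hcard
  omega

end Valuation

lemma factorial_div_factorial_mul_factorial (a b : ℕ) :
    (a + b + 1)! / (a ! * b !) = (a + 1) * (a + b + 1).choose (a + 1) := by
  refine Nat.div_eq_of_eq_mul_left (by positivity) ?_
  have h := add_choose_mul_factorial_mul_factorial b (a + 1)
  rw [show b + (a + 1) = a + b + 1 by ring, factorial_succ] at h
  rw [← h]
  ring

theorem exists_high_valuation_in_interval_general (p : ℕ) (hp : p.Prime) (a b : ℕ)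
    (i₁ : ℕ) (hi₁ : CarryAt p a b i₁) (hi₁max : ∀ i, CarryAt p a b i → i ≤ i₁) :
    (∃ c ∈ Finset.Icc (a + 1) (a + b + 1), i₁ + 1 ≤ padicValNat p c) ∧
      padicValNat p ((a + b + 1).factorial / (a.factorial * b.factorial)) ≤
        padicValNat p ((Finset.Icc (a + 1) (a + b + 1)).lcm id) := by
  have : Fact p.Prime := ⟨hp⟩
  obtain ⟨c, hc, hvc⟩ := exists_mem_Icc_le_padicValNat_of_carryAt hi₁
  refine ⟨⟨c, hc, hvc⟩, ?_⟩
  calc padicValNat p ((a + b + 1)! / (a ! * b !))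
      = padicValNat p (a + 1) + padicValNat p ((a + b + 1).choose (a + 1)) := by
        rw [factorial_div_factorial_mul_factorial,
          padicValNat.mul (succ_ne_zero a) (choose_pos (by omega)).ne']
    _ ≤ i₁ + 1 := padicValNat_add_padicValNat_choose_le hi₁ hi₁max
    _ ≤ padicValNat p c := hvc
    _ ≤ _ := padicValNat_le_padicValNat_lcm (by simp) hc

theorem exists_high_valuation_in_interval (p : ℕ) (hp : p.Prime) (a b : ℕ)
    (i₀ i₁ : ℕ) (hi₀ : CarryAt p a b i₀) (hi₀min : ∀ i, CarryAt p a b i → i₀ ≤ i)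
    (hi₁ : CarryAt p a b i₁) (hi₁max : ∀ i, CarryAt p a b i → i ≤ i₁) :
    (∃ c ∈ Finset.Icc (a + 1) (a + b + 1), i₁ + 1 ≤ padicValNat p c) ∧
      padicValNat p ((a + b + 1).factorial / (a.factorial * b.factorial)) ≤
        padicValNat p ((Finset.Icc (a + 1) (a + b + 1)).lcm id) :=
  exists_high_valuation_in_interval_general p hp a b i₁ hi₁ hi₁max
end

section
/- Let n, m ≥ 1, λ = (1^n), μ = (m). Writing Y_{T^λ} Y_{(T^μ)^{+n}} Y_{T^λ+T^μ} = ∑_ρ c_ρ ρ in ℤS_{n+m}: if ρ ∈ S_n · S_{[n+1,n+m]} then c_ρ = m!·n!·sgn(σ_ρ), where ρ = σ_ρ τ_ρ with σ_ρ ∈ S_n and τ_ρ ∈ S_{[n+1,n+m]}. -/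
open Finset Equiv MonoidAlgebra

namespace YS

variable {N : ℕ}

/-- The set of entries of a tableau `s` of shape `μ` with values in `Fin N`. -/
def entriesFinset (μ : YoungDiagram) (s : ↥μ.cells → Fin N) : Finset (Fin N) :=
  μ.cells.attach.image s

/-- The entries in row `i` of the tableau `s`. -/
def rowFinset (μ : YoungDiagram) (s : ↥μ.cells → Fin N) (i : ℕ) : Finset (Fin N) :=
  (μ.cells.attach.filter (fun c => c.val.1 = i)).image s

/-- The entries in column `j` of the tableau `s`. -/
def colFinset (μ : YoungDiagram) (s : ↥μ.cells → Fin N) (j : ℕ) : Finset (Fin N) :=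
  (μ.cells.attach.filter (fun c => c.val.2 = j)).image s

/-- The row stabilizer `R_s`: permutations fixing everything outside the entries of `s`
and permuting the entries within each row. -/
def rowStab (μ : YoungDiagram) (s : ↥μ.cells → Fin N) : Finset (Perm (Fin N)) :=
  univ.filter fun σ =>
    (∀ x, x ∉ entriesFinset μ s → σ x = x) ∧
    ∀ i ∈ μ.cells.image Prod.fst, ∀ x ∈ rowFinset μ s i, σ x ∈ rowFinset μ s i

/-- The column stabilizer `C_s`. -/
def colStab (μ : YoungDiagram) (s : ↥μ.cells → Fin N) : Finset (Perm (Fin N)) :=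
  univ.filter fun σ =>
    (∀ x, x ∉ entriesFinset μ s → σ x = x) ∧
    ∀ j ∈ μ.cells.image Prod.snd, ∀ x ∈ colFinset μ s j, σ x ∈ colFinset μ s j

/-- `{S} = ∑_{σ ∈ S} σ` in the integral group algebra. -/
noncomputable def sumElt (S : Finset (Perm (Fin N))) : MonoidAlgebra ℤ (Perm (Fin N)) :=
  ∑ σ ∈ S, MonoidAlgebra.single σ 1

/-- `[S] = ∑_{σ ∈ S} sgn(σ) σ` in the integral group algebra. -/
noncomputable def altElt (S : Finset (Perm (Fin N))) : MonoidAlgebra ℤ (Perm (Fin N)) :=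
  ∑ σ ∈ S, MonoidAlgebra.single σ ((Perm.sign σ : ℤˣ) : ℤ)

/-- The Young symmetrizer `Y_s = {R_s}[C_s]`. -/
noncomputable def youngSym (μ : YoungDiagram) (s : ↥μ.cells → Fin N) :
    MonoidAlgebra ℤ (Perm (Fin N)) :=
  sumElt (rowStab μ s) * altElt (colStab μ s)

/-- The row stabilizer `R_{s+t}` of the combined tableau: row `i` of `s+t` consists of
the entries of row `i` of `s` together with those of row `i` of `t`. -/
def combRowStab (lam mu : YoungDiagram) (s : ↥lam.cells → Fin N) (t : ↥mu.cells → Fin N) :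
    Finset (Perm (Fin N)) :=
  univ.filter fun σ =>
    (∀ x, x ∉ entriesFinset lam s ∪ entriesFinset mu t → σ x = x) ∧
    ∀ i ∈ lam.cells.image Prod.fst ∪ mu.cells.image Prod.fst,
      ∀ x ∈ rowFinset lam s i ∪ rowFinset mu t i, σ x ∈ rowFinset lam s i ∪ rowFinset mu t i

/-- The column stabilizer `C_{s+t} = C_s C_t` of the combined tableau: the columns of `s+t`
are exactly the columns of `s` together with the columns of `t`. -/
def combColStab (lam mu : YoungDiagram) (s : ↥lam.cells → Fin N) (t : ↥mu.cells → Fin N) :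
    Finset (Perm (Fin N)) :=
  univ.filter fun σ =>
    (∀ x, x ∉ entriesFinset lam s ∪ entriesFinset mu t → σ x = x) ∧
    (∀ j ∈ lam.cells.image Prod.snd, ∀ x ∈ colFinset lam s j, σ x ∈ colFinset lam s j) ∧
    (∀ j ∈ mu.cells.image Prod.snd, ∀ x ∈ colFinset mu t j, σ x ∈ colFinset mu t j)

/-- The Young symmetrizer `Y_{s+t}` of the combined tableau `s+t` of shape `λ+μ`. -/
noncomputable def combYoungSym (lam mu : YoungDiagram) (s : ↥lam.cells → Fin N)
    (t : ↥mu.cells → Fin N) : MonoidAlgebra ℤ (Perm (Fin N)) :=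
  sumElt (combRowStab lam mu s t) * altElt (combColStab lam mu s t)

/-- The (nonnegative) gcd of the coefficients of an element of the group algebra. -/
noncomputable def coeffGcd (f : MonoidAlgebra ℤ (Perm (Fin N))) : ℤ :=
  f.coeff.support.gcd f.coeff

end YS

/-- The column Young diagram `(1^n)`. -/
def colYD (n : ℕ) : YoungDiagram where
  cells := Finset.range n ×ˢ {0}
  isLowerSet := by
    rintro ⟨i2, j2⟩ ⟨i1, j1⟩ ⟨hi, hj⟩ h
    simp only [Finset.coe_product, Set.mem_prod, Finset.mem_coe, Finset.mem_range,
      Finset.mem_singleton] at h ⊢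
    omega

/-- The row Young diagram `(m)`. -/
def rowYD (m : ℕ) : YoungDiagram where
  cells := ({0} : Finset ℕ) ×ˢ Finset.range m
  isLowerSet := by
    rintro ⟨i2, j2⟩ ⟨i1, j1⟩ ⟨hi, hj⟩ h
    simp only [Finset.coe_product, Set.mem_prod, Finset.mem_coe, Finset.mem_range,
      Finset.mem_singleton] at h ⊢
    omega

/-- The tableau `T^{(1^n)}` of shape `(1^n)` with entries `0, 1, …, n-1` (in `Fin (n+m)`),
reading down the unique column. -/
def colTab (n m : ℕ) : ↥(colYD n).cells → Fin (n + m) := fun c =>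
  ⟨c.val.1, by
    have h := c.property
    simp only [colYD, Finset.mem_product, Finset.mem_range, Finset.mem_singleton] at h
    omega⟩

/-- The tableau `(T^{(m)})^{+n}` of shape `(m)` with entries `n, n+1, …, n+m-1`. -/
def rowTabShift (n m : ℕ) : ↥(rowYD m).cells → Fin (n + m) := fun c =>
  ⟨n + c.val.2, by
    have h := c.property
    simp only [rowYD, Finset.mem_product, Finset.mem_range, Finset.mem_singleton] at h
    omega⟩


/-!
Write `G = S_n`, `H = S_{[n+1,n+m]}` and `K = S_{{1} ∪ [n+1,n+m]}` inside `S_{n+m}`. The three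
symmetrizers are `Y_{T^λ} = [G]`, `Y_{(T^μ)^{+n}} = {H}` and `Y_{T^λ+T^μ} = {K}[G]`, and since
`H ≤ K` we get `{H}{K} = m! {K}`, so the product is `m! [G]{K}[G]`. The coefficient of `στ`
(`σ ∈ G`, `τ ∈ H`) in `[G]{K}[G]` is the signed count of pairs `a, d ∈ G` with
`a⁻¹ σ τ d⁻¹ ∈ K`. As `τ ∈ K` commutes with `G` and `G ∩ K = 1`, this forces `a = σ d⁻¹`,
leaving `n!` terms, each equal to `sgn σ`.
-/

open scoped Nat

namespace Equiv.Perm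

variable {α : Type*}

def permsOn (s : Finset α) : Subgroup (Perm α) :=
  fixingSubgroup (Perm α) (s : Set α)ᶜ

variable {s t : Finset α} {π ρ : Perm α}

theorem mem_permsOn : π ∈ permsOn s ↔ ∀ x ∉ s, π x = x := by
  simp [permsOn, mem_fixingSubgroup_iff, Perm.smul_def]

instance [Fintype α] [DecidableEq α] : DecidablePred (· ∈ permsOn s) :=
  fun _ ↦ decidable_of_iff' _ mem_permsOn

theorem apply_mem_iff_of_mem_permsOn (hπ : π ∈ permsOn s) {x : α} : π x ∈ s ↔ x ∈ s := by
  refine ⟨fun h ↦ ?_, fun hx ↦ ?_⟩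
  · by_contra hx
    exact hx (mem_permsOn.1 hπ x hx ▸ h)
  · by_contra h
    have hfix : π x = x := π.injective (mem_permsOn.1 hπ _ h)
    exact h (by rwa [hfix])

theorem permsOn_mono (hst : s ⊆ t) : permsOn s ≤ permsOn t :=
  fixingSubgroup_antitone _ _ (Set.compl_subset_compl.2 (coe_subset.2 hst))

theorem permsOn_inf_permsOn [DecidableEq α] : permsOn s ⊓ permsOn t = permsOn (s ∩ t) := by
  simp only [permsOn, ← fixingSubgroup_union, coe_inter, Set.compl_inter]

theorem permsOn_eq_bot (hs : #s ≤ 1) : permsOn s = ⊥ := by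
  refine (Subgroup.eq_bot_iff_forall _).2 fun π hπ ↦ Perm.ext fun x ↦ ?_
  by_cases hx : x ∈ s
  · exact card_le_one.1 hs _ ((apply_mem_iff_of_mem_permsOn hπ).2 hx) _ hx
  · exact mem_permsOn.1 hπ x hx

theorem commute_of_mem_permsOn (hst : _root_.Disjoint s t) (hπ : π ∈ permsOn s)
    (hρ : ρ ∈ permsOn t) : Commute π ρ :=
  Perm.Disjoint.commute fun x ↦ by
    by_cases hx : x ∈ s
    · exact .inr (mem_permsOn.1 hρ x (disjoint_left.1 hst hx))
    · exact .inl (mem_permsOn.1 hπ x hx)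

theorem card_permsOn [Fintype α] [DecidableEq α] (s : Finset α) :
    #{π | π ∈ permsOn s} = (#s)! := by
  rw [← Fintype.card_subtype, ← Fintype.card_coe s, ← Fintype.card_perm]
  exact Fintype.card_congr <| (Equiv.subtypeEquivRight fun π ↦ mem_permsOn).trans
    (Perm.subtypeEquivSubtypePerm (· ∈ s)).symm

end Equiv.Perm

theorem Subgroup.inv_mul_mul_mem_iff {Γ : Type*} [Group Γ] {G K : Subgroup Γ}
    (hGK : Disjoint G K) {g t a d : Γ} (hg : g ∈ G) (ht : t ∈ K) (htd : Commute t d)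
    (ha : a ∈ G) (hd : d ∈ G) : a⁻¹ * (g * t) * d⁻¹ ∈ K ↔ a = g * d⁻¹ := by
  have hsplit : a⁻¹ * (g * t) * d⁻¹ = a⁻¹ * g * d⁻¹ * t := by
    rw [mul_assoc (a⁻¹ * g), ← htd.inv_right.eq]; group
  have hG : a⁻¹ * g * d⁻¹ ∈ G := G.mul_mem (G.mul_mem (G.inv_mem ha) hg) (G.inv_mem hd)
  rw [hsplit, K.mul_mem_cancel_right ht]
  constructor
  · intro hK
    have h1 := Subgroup.disjoint_def.1 hGK hG hK
    rw [mul_inv_eq_one, inv_mul_eq_iff_eq_mul] at h1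
    exact eq_mul_inv_of_mul_eq h1.symm
  · rintro rfl
    simp

namespace YS

open Equiv.Perm

section GroupAlgebra

variable {N : ℕ}

theorem coeff_sumElt (S : Finset (Perm (Fin N))) (π : Perm (Fin N)) :
    (sumElt S).coeff π = if π ∈ S then 1 else 0 := by
  simp [sumElt, coeff_sum, Finsupp.single_apply]

theorem sumElt_singleton_one : sumElt ({1} : Finset (Perm (Fin N))) = 1 := by
  simp [sumElt, MonoidAlgebra.one_def]

theorem altElt_singleton_one : altElt ({1} : Finset (Perm (Fin N))) = 1 := by
  simp [altElt, MonoidAlgebra.one_def]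

theorem sumElt_mul_sumElt_of_subset (K : Subgroup (Perm (Fin N))) [DecidablePred (· ∈ K)]
    {S : Finset (Perm (Fin N))} (hS : ∀ π ∈ S, π ∈ K) :
    sumElt S * sumElt {π | π ∈ K} = #S • sumElt {π | π ∈ K} := by
  rw [sumElt, sum_mul, ← sum_const]
  refine sum_congr rfl fun s hs ↦ ?_
  rw [sumElt, mul_sum]
  simp only [single_mul_single, one_mul]
  exact sum_nbij' (s * ·) (s⁻¹ * ·) (by simp [K.mul_mem_cancel_left (hS s hs)])
    (by simp [K.mul_mem_cancel_left (K.inv_mem (hS s hs))]) (by simp) (by simp) (by simp)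

theorem coeff_altElt_mul_mul_altElt (A B : Finset (Perm (Fin N)))
    (x : MonoidAlgebra ℤ (Perm (Fin N))) (ρ : Perm (Fin N)) :
    (altElt A * x * altElt B).coeff ρ =
      ∑ a ∈ A, ∑ b ∈ B, (sign a : ℤ) * x.coeff (a⁻¹ * ρ * b⁻¹) * (sign b : ℤ) := by
  simp only [altElt, sum_mul, mul_sum, mul_assoc, coeff_sum, Finsupp.coe_finsetSum,
    Finset.sum_apply, coeff_single_mul_apply, coeff_mul_single_apply]
  exact sum_comm

theorem coeff_altElt_mul_sumElt_mul_altElt {G K : Subgroup (Perm (Fin N))}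
    [DecidablePred (· ∈ G)] [DecidablePred (· ∈ K)] (hGK : Disjoint G K) {g t : Perm (Fin N)}
    (hg : g ∈ G) (ht : t ∈ K) (hcomm : ∀ d ∈ G, Commute t d) :
    (altElt {π | π ∈ G} * sumElt {π | π ∈ K} * altElt {π | π ∈ G}).coeff (g * t) =
      #{π | π ∈ G} * (sign g : ℤ) := by
  rw [coeff_altElt_mul_mul_altElt, sum_comm]
  calc _ = ∑ d ∈ {π | π ∈ G}, ∑ a ∈ {π | π ∈ G}, if a = g * d⁻¹ then (sign g : ℤ) else 0 := by
        refine sum_congr rfl fun d hd ↦ sum_congr rfl fun a ha ↦ ?_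
        simp only [mem_filter, mem_univ, true_and] at ha hd
        have hK := Subgroup.inv_mul_mul_mem_iff hGK hg ht (hcomm d hd) ha hd
        rw [coeff_sumElt, if_congr (by simpa using hK) rfl rfl]
        split_ifs with h
        · rw [h, mul_one, ← Units.val_mul, ← map_mul, inv_mul_cancel_right]
        · simp
    _ = ∑ d ∈ {π | π ∈ G}, (sign g : ℤ) := by
        refine sum_congr rfl fun d hd ↦ ?_
        simp only [mem_filter, mem_univ, true_and] at hd
        rw [sum_ite_eq', if_pos (by simpa using G.mul_mem hg (G.inv_mem hd))]
    _ = _ := by simp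

end GroupAlgebra

section Tableaux

variable {N n m : ℕ}

theorem mem_entriesFinset {μ : YoungDiagram} {s : ↥μ.cells → Fin N} {x : Fin N} :
    x ∈ entriesFinset μ s ↔ ∃ c, ∃ h : c ∈ μ.cells, s ⟨c, h⟩ = x := by
  simp [entriesFinset]

theorem mem_rowFinset {μ : YoungDiagram} {s : ↥μ.cells → Fin N} {i : ℕ} {x : Fin N} :
    x ∈ rowFinset μ s i ↔ ∃ c, ∃ h : c ∈ μ.cells, c.1 = i ∧ s ⟨c, h⟩ = x := by
  simp [rowFinset]

theorem mem_colFinset {μ : YoungDiagram} {s : ↥μ.cells → Fin N} {j : ℕ} {x : Fin N} :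
    x ∈ colFinset μ s j ↔ ∃ c, ∃ h : c ∈ μ.cells, c.2 = j ∧ s ⟨c, h⟩ = x := by
  simp [colFinset]

@[simp] theorem mk_mem_colYD {i j : ℕ} : (i, j) ∈ colYD n ↔ i < n ∧ j = 0 := by
  simp [← YoungDiagram.mem_cells, colYD, eq_comm]

@[simp] theorem mk_mem_rowYD {i j : ℕ} : (i, j) ∈ rowYD m ↔ i = 0 ∧ j < m := by
  simp [← YoungDiagram.mem_cells, rowYD, eq_comm, and_comm]

theorem mem_image_fst_colYD {i : ℕ} : i ∈ (colYD n).cells.image Prod.fst ↔ i < n := by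
  simp

theorem mem_image_snd_colYD {j : ℕ} :
    j ∈ (colYD n).cells.image Prod.snd ↔ 0 < n ∧ j = 0 := by
  simp only [mem_image, YoungDiagram.mem_cells, Prod.exists, mk_mem_colYD]
  exact ⟨fun ⟨_, _, ⟨ha, hb⟩, hj⟩ ↦ ⟨by omega, hj ▸ hb⟩, fun ⟨hn, hj⟩ ↦ ⟨0, j, ⟨hn, hj⟩, rfl⟩⟩

theorem mem_image_fst_rowYD {i : ℕ} :
    i ∈ (rowYD m).cells.image Prod.fst ↔ 0 < m ∧ i = 0 := by
  simp only [mem_image, YoungDiagram.mem_cells, Prod.exists, mk_mem_rowYD]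
  exact ⟨fun ⟨_, _, ⟨ha, hb⟩, hi⟩ ↦ ⟨by omega, hi ▸ ha⟩, fun ⟨hm, hi⟩ ↦ ⟨i, 0, ⟨hi, hm⟩, rfl⟩⟩

theorem mem_image_snd_rowYD {j : ℕ} : j ∈ (rowYD m).cells.image Prod.snd ↔ j < m := by
  simp

theorem mem_entriesFinset_colTab {x : Fin (n + m)} :
    x ∈ entriesFinset (colYD n) (colTab n m) ↔ x.val < n := by
  simp [mem_entriesFinset, colTab, Fin.ext_iff]

theorem mem_rowFinset_colTab {i : ℕ} {x : Fin (n + m)} :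
    x ∈ rowFinset (colYD n) (colTab n m) i ↔ i < n ∧ x.val = i := by
  simp [mem_rowFinset, colTab, Fin.ext_iff, eq_comm]

theorem mem_colFinset_colTab {j : ℕ} {x : Fin (n + m)} :
    x ∈ colFinset (colYD n) (colTab n m) j ↔ j = 0 ∧ x.val < n := by
  simp [mem_colFinset, colTab, Fin.ext_iff, and_comm]

theorem mem_entriesFinset_rowTabShift {x : Fin (n + m)} :
    x ∈ entriesFinset (rowYD m) (rowTabShift n m) ↔ n ≤ x.val := by
  simp only [mem_entriesFinset, rowTabShift, Fin.ext_iff]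
  exact ⟨fun ⟨_, h, hx⟩ ↦ hx ▸ Nat.le_add_right _ _,
    fun hx ↦ ⟨(0, x.val - n), mk_mem_rowYD.2 ⟨rfl, by omega⟩, by dsimp only; omega⟩⟩

theorem mem_rowFinset_rowTabShift {i : ℕ} {x : Fin (n + m)} :
    x ∈ rowFinset (rowYD m) (rowTabShift n m) i ↔ i = 0 ∧ n ≤ x.val := by
  simp only [mem_rowFinset, rowTabShift, Fin.ext_iff]
  exact ⟨fun ⟨(a, b), h, hi, hx⟩ ↦ ⟨hi ▸ (mk_mem_rowYD.1 h).1, hx ▸ Nat.le_add_right _ _⟩,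
    fun ⟨hi, hx⟩ ↦ ⟨(i, x.val - n), mk_mem_rowYD.2 ⟨hi, by omega⟩, rfl, by dsimp only; omega⟩⟩

theorem mem_colFinset_rowTabShift {j : ℕ} {x : Fin (n + m)} :
    x ∈ colFinset (rowYD m) (rowTabShift n m) j ↔ j < m ∧ x.val = n + j := by
  simp [mem_colFinset, rowTabShift, Fin.ext_iff, eq_comm]

/- Entries are 0-indexed: the paper's `{1, …, n}` and `[n+1, n+m]` are `lowerBlock n m` and
`upperBlock n m`, and `combFirstRow n m`, the first row of `T^λ + T^μ`, is its
`{1} ∪ [n+1, n+m]`. -/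

def lowerBlock (n m : ℕ) : Finset (Fin (n + m)) := {x | x.val < n}

def upperBlock (n m : ℕ) : Finset (Fin (n + m)) := {x | n ≤ x.val}

def combFirstRow (n m : ℕ) : Finset (Fin (n + m)) := {x | x.val = 0 ∨ n ≤ x.val}

@[simp] theorem mem_lowerBlock {x : Fin (n + m)} : x ∈ lowerBlock n m ↔ x.val < n := by
  simp [lowerBlock]

@[simp] theorem mem_upperBlock {x : Fin (n + m)} : x ∈ upperBlock n m ↔ n ≤ x.val := by
  simp [upperBlock]

@[simp] theorem mem_combFirstRow {x : Fin (n + m)} :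
    x ∈ combFirstRow n m ↔ x.val = 0 ∨ n ≤ x.val := by
  simp [combFirstRow]

theorem card_lowerBlock : #(lowerBlock n m) = n := by
  rw [lowerBlock, Fin.card_filter_val_lt]; omega

theorem card_upperBlock : #(upperBlock n m) = m := by
  have h := card_filter_add_card_filter_not (s := univ) (fun x : Fin (n + m) ↦ x.val < n)
  simp only [Fin.card_filter_val_lt, not_lt, Finset.card_fin] at h
  rw [upperBlock]; omega

theorem disjoint_upperBlock_lowerBlock : Disjoint (upperBlock n m) (lowerBlock n m) := by
  simp only [disjoint_left, mem_upperBlock, mem_lowerBlock]; omega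

theorem upperBlock_subset_combFirstRow : upperBlock n m ⊆ combFirstRow n m := by
  intro x; simp only [mem_upperBlock, mem_combFirstRow]; omega

theorem disjoint_permsOn_lowerBlock_combFirstRow :
    Disjoint (permsOn (lowerBlock n m)) (permsOn (combFirstRow n m)) := by
  rw [disjoint_iff, permsOn_inf_permsOn]
  refine permsOn_eq_bot (card_le_one.2 fun x hx y hy ↦ ?_)
  simp only [mem_inter, mem_lowerBlock, mem_combFirstRow] at hx hy
  omega

theorem rowStab_colTab : rowStab (colYD n) (colTab n m) = {1} := by
  ext π
  simp only [rowStab, mem_filter, mem_univ, true_and, mem_singleton, mem_entriesFinset_colTab,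
    mem_image_fst_colYD, mem_rowFinset_colTab]
  refine ⟨fun ⟨hout, hrow⟩ ↦ Perm.ext fun x ↦ ?_, by rintro rfl; simp⟩
  by_cases hx : x.val < n
  · exact Fin.ext (hrow _ hx x ⟨hx, rfl⟩).2
  · exact hout x hx

theorem colStab_rowTabShift : colStab (rowYD m) (rowTabShift n m) = {1} := by
  ext π
  simp only [colStab, mem_filter, mem_univ, true_and, mem_singleton,
    mem_entriesFinset_rowTabShift, mem_image_snd_rowYD, mem_colFinset_rowTabShift]
  refine ⟨fun ⟨hout, hcol⟩ ↦ Perm.ext fun x ↦ ?_, by rintro rfl; simp⟩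
  by_cases hx : n ≤ x.val
  · have := (hcol (x.val - n) (by omega) x ⟨by omega, by omega⟩).2
    exact Fin.ext (by rw [Perm.coe_one, id_eq]; omega)
  · exact hout x hx

theorem colStab_colTab :
    colStab (colYD n) (colTab n m) = ({π | π ∈ permsOn (lowerBlock n m)} : Finset _) := by
  ext π
  simp only [colStab, mem_filter, mem_univ, true_and, mem_entriesFinset_colTab,
    mem_image_snd_colYD, mem_colFinset_colTab]
  refine ⟨fun ⟨hout, _⟩ ↦ mem_permsOn.2 fun x hx ↦ hout x (by simpa using hx),
    fun hπ ↦ ⟨fun x hx ↦ mem_permsOn.1 hπ x (by simpa using hx), fun j _ x ⟨hj, hx⟩ ↦ ⟨hj, ?_⟩⟩⟩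
  simpa using (apply_mem_iff_of_mem_permsOn hπ).2 (by simpa using hx)

theorem rowStab_rowTabShift :
    rowStab (rowYD m) (rowTabShift n m) = ({π | π ∈ permsOn (upperBlock n m)} : Finset _) := by
  ext π
  simp only [rowStab, mem_filter, mem_univ, true_and, mem_entriesFinset_rowTabShift,
    mem_image_fst_rowYD, mem_rowFinset_rowTabShift]
  refine ⟨fun ⟨hout, _⟩ ↦ mem_permsOn.2 fun x hx ↦ hout x (by simpa using hx),
    fun hπ ↦ ⟨fun x hx ↦ mem_permsOn.1 hπ x (by simpa using hx), fun i _ x ⟨hi, hx⟩ ↦ ⟨hi, ?_⟩⟩⟩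
  simpa using (apply_mem_iff_of_mem_permsOn hπ).2 (by simpa using hx)

theorem combColStab_eq : combColStab (colYD n) (rowYD m) (colTab n m) (rowTabShift n m) =
    ({π | π ∈ permsOn (lowerBlock n m)} : Finset _) := by
  ext π
  simp only [combColStab, mem_filter, mem_univ, true_and, mem_union, mem_entriesFinset_colTab,
    mem_entriesFinset_rowTabShift, mem_image_snd_colYD, mem_colFinset_colTab, mem_image_snd_rowYD,
    mem_colFinset_rowTabShift]
  refine ⟨fun ⟨_, _, hcol⟩ ↦ mem_permsOn.2 fun x hx ↦ ?_, fun hπ ↦ ⟨?_, ?_, ?_⟩⟩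
  · rw [mem_lowerBlock, not_lt] at hx
    have := (hcol (x.val - n) (by omega) x ⟨by omega, by omega⟩).2
    exact Fin.ext (by omega)
  · intro x hx; omega
  · intro j _ x ⟨hj, hx⟩
    exact ⟨hj, by simpa using (apply_mem_iff_of_mem_permsOn hπ).2 (by simpa using hx)⟩
  · intro j hj x ⟨_, hx⟩
    rw [mem_permsOn.1 hπ x (by rw [mem_lowerBlock]; omega)]
    exact ⟨hj, hx⟩

theorem combRowStab_eq : combRowStab (colYD n) (rowYD m) (colTab n m) (rowTabShift n m) =
    ({π | π ∈ permsOn (combFirstRow n m)} : Finset _) := by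
  ext π
  simp only [combRowStab, mem_filter, mem_univ, true_and, mem_union, mem_entriesFinset_colTab,
    mem_entriesFinset_rowTabShift, mem_image_fst_colYD, mem_rowFinset_colTab, mem_image_fst_rowYD,
    mem_rowFinset_rowTabShift]
  refine ⟨fun ⟨_, hrow⟩ ↦ mem_permsOn.2 fun x hx ↦ Fin.ext ?_, fun hπ ↦ ⟨?_, ?_⟩⟩
  · rw [mem_combFirstRow] at hx
    have := hrow x.val (.inl (by omega)) x (.inl ⟨by omega, rfl⟩)
    omega
  · intro x hx; omega
  · intro i _ x hx
    have hfix := fun h ↦ congrArg Fin.val (mem_permsOn.1 hπ x h)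
    have hmem := apply_mem_iff_of_mem_permsOn hπ (x := x)
    simp only [mem_combFirstRow] at hfix hmem
    omega

theorem youngSym_mul_youngSym_mul_combYoungSym :
    youngSym (colYD n) (colTab n m) * youngSym (rowYD m) (rowTabShift n m) *
        combYoungSym (colYD n) (rowYD m) (colTab n m) (rowTabShift n m) =
      m ! • (altElt {π | π ∈ permsOn (lowerBlock n m)} *
        sumElt {π | π ∈ permsOn (combFirstRow n m)} *
          altElt {π | π ∈ permsOn (lowerBlock n m)}) := by
  have hHK : ∀ π ∈ ({π | π ∈ permsOn (upperBlock n m)} : Finset _),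
      π ∈ permsOn (combFirstRow n m) := fun π hπ ↦
    permsOn_mono upperBlock_subset_combFirstRow (by simpa using hπ)
  rw [youngSym, youngSym, combYoungSym, rowStab_colTab, colStab_colTab, rowStab_rowTabShift,
    colStab_rowTabShift, combRowStab_eq, combColStab_eq, sumElt_singleton_one,
    altElt_singleton_one, one_mul, mul_one, mul_assoc (altElt _), ← mul_assoc (sumElt _),
    sumElt_mul_sumElt_of_subset _ hHK, card_permsOn, card_upperBlock, smul_mul_assoc,
    mul_smul_comm, ← mul_assoc]

theorem permCongr_sumCongr_eq_mul (σ : Perm (Fin n)) (τ : Perm (Fin m)) :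
    finSumFinEquiv.permCongr (σ.sumCongr τ) = finSumFinEquiv.permCongr (σ.sumCongr 1) *
      finSumFinEquiv.permCongr (Perm.sumCongr 1 τ) := by
  rw [← permCongr_mul, sumCongr_mul, mul_one, one_mul]

theorem permCongr_sumCongr_one_mem (σ : Perm (Fin n)) :
    finSumFinEquiv.permCongr (σ.sumCongr (1 : Perm (Fin m))) ∈ permsOn (lowerBlock n m) := by
  refine mem_permsOn.2 fun x hx ↦ ?_
  induction x using Fin.addCases with
  | left i => simp at hx
  | right j => simp

theorem permCongr_one_sumCongr_mem (τ : Perm (Fin m)) :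
    finSumFinEquiv.permCongr (Perm.sumCongr (1 : Perm (Fin n)) τ) ∈ permsOn (upperBlock n m) := by
  refine mem_permsOn.2 fun x hx ↦ ?_
  induction x using Fin.addCases with
  | left i => simp
  | right j => simp at hx

end Tableaux

end YS

open YS Equiv in
theorem coeff_column_row_on_parabolic_general (n m : ℕ)
    (σ : Perm (Fin n)) (τ : Perm (Fin m)) :
    (youngSym (colYD n) (colTab n m) * youngSym (rowYD m) (rowTabShift n m) *
        combYoungSym (colYD n) (rowYD m) (colTab n m) (rowTabShift n m)).coeff
      (finSumFinEquiv.permCongr (σ.sumCongr τ)) =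
      (m.factorial * n.factorial : ℤ) * ((Perm.sign σ : ℤˣ) : ℤ) := by
  have hτ := permCongr_one_sumCongr_mem (n := n) τ
  rw [youngSym_mul_youngSym_mul_combYoungSym, coeff_smul_apply, permCongr_sumCongr_eq_mul,
    coeff_altElt_mul_sumElt_mul_altElt disjoint_permsOn_lowerBlock_combFirstRow
      (permCongr_sumCongr_one_mem σ) (Perm.permsOn_mono upperBlock_subset_combFirstRow hτ)
      fun d hd ↦ Perm.commute_of_mem_permsOn disjoint_upperBlock_lowerBlock hτ hd,
    Perm.card_permsOn, card_lowerBlock, Perm.sign_permCongr, Perm.sign_sumCongr, Perm.sign_one,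
    mul_one, nsmul_eq_mul]
  ring

open YS Equiv in
/-- For `λ = (1^n)`, `μ = (m)`: the coefficient of `ρ = σ_ρ τ_ρ ∈ S_n · S_{[n+1,n+m]}` in
`Y_{T^λ} Y_{(T^μ)^{+n}} Y_{T^λ+T^μ}` equals `m! n! sgn(σ_ρ)`. -/
theorem coeff_column_row_on_parabolic (n m : ℕ) (hn : 1 ≤ n) (hm : 1 ≤ m)
    (σ : Perm (Fin n)) (τ : Perm (Fin m)) :
    (youngSym (colYD n) (colTab n m) * youngSym (rowYD m) (rowTabShift n m) *
        combYoungSym (colYD n) (rowYD m) (colTab n m) (rowTabShift n m)).coeff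
      (finSumFinEquiv.permCongr (σ.sumCongr τ)) =
      (m.factorial * n.factorial : ℤ) * ((Perm.sign σ : ℤˣ) : ℤ) :=
  coeff_column_row_on_parabolic_general n m σ τ
end
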